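/- If e^β > (N−1)/(2^{1/N} − 1), then the Cayley distance kernel matrix K(σ₁,σ₂) = e^{−β·d_C(σ₁,σ₂)} on Sym(N) is positive definite. -/

import Mathlib

open Equiv

/-- Number of cycles (orbits, including fixed points) of a permutation. -/
def numCycles {N : ℕ} (σ : Perm (Fin N)) : ℕ :=
  (Finset.univ.filter fun x => σ x = x).card + σ.cycleType.card

/-- Cayley distance on `Sym(N)`: `d_C(σ₁,σ₂) = N − #cycles(σ₁⁻¹∘σ₂)`. -/
def cayleyDist {N : ℕ} (σ₁ σ₂ : Perm (Fin N)) : ℕ :=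
  N - numCycles (σ₁⁻¹ * σ₂)

/-- The Cayley distance kernel at inverse temperature `β` on `Sym(N)`. -/
noncomputable def cayleyKernel (N : ℕ) (β : ℝ) :
    Matrix (Perm (Fin N)) (Perm (Fin N)) ℝ :=
  Matrix.of fun σ₁ σ₂ => Real.exp (-β * (cayleyDist σ₁ σ₂ : ℝ))

/-!
The kernel is a symmetric matrix with unit diagonal, so by Gershgorin's theorem it is positive
definite once every off-diagonal row sum is below `1`. By left invariance of `d_C`, every row sum
equals `∑_τ q ^ d_C(1, τ)` with `q = e^{-β}`. A permutation at distance `j` from the identity is a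
product of `j` transpositions (a `k`-cycle is a product of `k - 1` of them), so at most
`C(N, 2) ^ j` permutations lie at distance `j`, and the row sum is at most
`∑_{j ≤ N} (C(N, 2) q) ^ j`. Bernoulli's inequality `2 ^ (1 / N) ≤ 1 + 1 / N` turns the hypothesis
into `N (N - 1) < e^β`, that is `C(N, 2) q < 1 / 2`, so the full row sum is below `2`.
-/

open Finset Equiv.Perm
open scoped ComplexOrder Pointwise

theorem Matrix.IsHermitian.posDef_of_sum_norm_lt_re {n 𝕜 : Type*} [Fintype n] [DecidableEq n]
    [RCLike 𝕜] {A : Matrix n n 𝕜} (hA : A.IsHermitian)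
    (h : ∀ i, ∑ j ∈ univ.erase i, ‖A i j‖ < RCLike.re (A i i)) : A.PosDef := by
  refine hA.posDef_iff_eigenvalues_pos.2 fun i => ?_
  have hμ : Module.End.HasEigenvalue (Matrix.toLin' A) (hA.eigenvalues i : 𝕜) := by
    refine Module.End.hasEigenvalue_of_hasEigenvector (x := ⇑(hA.eigenvectorBasis i)) ⟨?_, ?_⟩
    · rw [Module.End.mem_eigenspace_iff, Matrix.toLin'_apply, hA.mulVec_eigenvectorBasis,
        RCLike.real_smul_eq_coe_smul (K := 𝕜)]
    · simpa using (hA.eigenvectorBasis.orthonormal.ne_zero i)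
  obtain ⟨k, hk⟩ := eigenvalue_mem_ball hμ
  rw [Metric.mem_closedBall, dist_comm, dist_eq_norm] at hk
  have := RCLike.re_le_norm (A k k - hA.eigenvalues i)
  simp only [map_sub, RCLike.ofReal_re] at this
  linarith [h k]

lemma mul_sub_one_le_div_two_rpow_sub_one {x : ℝ} (hx : 1 ≤ x) :
    x * (x - 1) ≤ (x - 1) / (2 ^ (1 / x) - 1) := by
  have hroot : (2 : ℝ) ^ (1 / x) ≤ 1 + 1 / x := by
    simpa [one_add_one_eq_two] using
      rpow_one_add_le_one_add_mul_self (s := 1) (by norm_num) (p := 1 / x) (by positivity)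
        (div_le_one_of_le₀ hx (by positivity))
  have hpos : 0 < (2 : ℝ) ^ (1 / x) - 1 :=
    sub_pos.2 (Real.one_lt_rpow (by norm_num) (by positivity))
  calc x * (x - 1) = (x - 1) / (1 / x) := by field_simp
    _ ≤ (x - 1) / (2 ^ (1 / x) - 1) :=
      div_le_div_of_nonneg_left (by linarith) hpos (by linarith)

lemma geom_sum_lt_two {r : ℝ} (h0 : 0 ≤ r) (h : r < 1 / 2) (n : ℕ) :
    ∑ i ∈ range n, r ^ i < 2 := by
  have hgeom := mul_neg_geom_sum r n
  have hsum : 0 ≤ ∑ i ∈ range n, r ^ i := by positivity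
  nlinarith [pow_nonneg h0 n]

lemma Finset.list_prod_mem_pow {M : Type*} [Monoid M] [DecidableEq M] {S : Finset M}
    {l : List M} (hl : ∀ s ∈ l, s ∈ S) : l.prod ∈ S ^ l.length := by
  induction l with
  | nil => simp
  | cons a l ih =>
    rw [List.prod_cons, List.length_cons, pow_succ']
    exact mul_mem_mul (hl a List.mem_cons_self) (ih fun s hs => hl s (List.mem_cons_of_mem a hs))

namespace Equiv.Perm
variable {α : Type*} [DecidableEq α]

lemma isSwap_of_mem_zipWith_swap {l : List α} (hl : l.Nodup) {s : Perm α}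
    (hs : s ∈ List.zipWith swap l l.tail) : s.IsSwap := by
  obtain ⟨i, hi, rfl⟩ := List.getElem_of_mem hs
  simp only [List.getElem_zipWith, List.getElem_tail]
  exact ⟨_, _, fun h => by simpa using hl.getElem_inj_iff.1 h, rfl⟩

variable [Fintype α]

lemma IsCycle.exists_isSwap_prod_eq {c : Perm α} (hc : c.IsCycle) :
    ∃ l : List (Perm α), (∀ s ∈ l, s.IsSwap) ∧ l.prod = c ∧ l.length + 1 = #c.support := by
  obtain ⟨x, hx, -⟩ := id hc
  have hcx : c.cycleOf x = c := hc.cycleOf_eq hx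
  refine ⟨List.zipWith swap (c.toList x) (c.toList x).tail,
    fun s hs => isSwap_of_mem_zipWith_swap (nodup_toList c x) hs, ?_, ?_⟩
  · rw [← List.formPerm, formPerm_toList, hcx]
  · have := length_toList_pos_of_mem_support c x (mem_support.2 hx)
    simp only [List.length_zipWith, List.length_tail, length_toList, hcx] at this ⊢
    omega

lemma exists_isSwap_prod_eq (σ : Perm α) :
    ∃ l : List (Perm α), (∀ s ∈ l, s.IsSwap) ∧ l.prod = σ ∧
      l.length + σ.cycleType.card = #σ.support := by
  induction σ using cycle_induction_on with
  | base_one => exact ⟨[], by simp, by simp, by simp⟩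
  | base_cycles c hc =>
    simpa [hc.cycleType] using hc.exists_isSwap_prod_eq
  | induction_disjoint σ τ hd _ ihσ ihτ =>
    obtain ⟨l₁, hl₁, rfl, hlen₁⟩ := ihσ
    obtain ⟨l₂, hl₂, rfl, hlen₂⟩ := ihτ
    refine ⟨l₁ ++ l₂, fun s hs => ?_, List.prod_append, ?_⟩
    · exact (List.mem_append.1 hs).elim (hl₁ s) (hl₂ s)
    · rw [List.length_append, hd.cycleType_mul, hd.card_support_mul, Multiset.card_add]
      omega

lemma card_filter_isSwap_le [DecidablePred (IsSwap : Perm α → Prop)] :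
    #{σ : Perm α | σ.IsSwap} ≤ (Fintype.card α).choose 2 := by
  rw [← card_univ, ← Sym2.card_image_offDiag]
  refine (card_le_card fun σ hσ => ?_).trans (card_image_le (f := Sym2.lift ⟨swap, swap_comm⟩))
  obtain ⟨x, y, hxy, rfl⟩ := (mem_filter.1 hσ).2
  exact mem_image.2
    ⟨s(x, y), mem_image_of_mem _ (mem_offDiag.2 ⟨mem_univ x, mem_univ y, hxy⟩), rfl⟩

end Equiv.Perm

section Cayley
variable {N : ℕ}

lemma numCycles_add_card_support (σ : Perm (Fin N)) :
    numCycles σ + #σ.support = N + σ.cycleType.card := by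
  have := card_filter_add_card_filter_not (s := univ) fun x => σ x = x
  rw [card_univ, Fintype.card_fin] at this
  have hsupp : #σ.support = #{x | ¬σ x = x} := rfl
  unfold numCycles
  omega

lemma numCycles_inv (σ : Perm (Fin N)) : numCycles σ⁻¹ = numCycles σ := by
  unfold numCycles
  rw [cycleType_inv]
  congr 2
  ext x
  simp only [mem_filter, mem_univ, true_and]
  exact inv_eq_iff_eq.trans eq_comm

lemma numCycles_one : numCycles (1 : Perm (Fin N)) = N := by
  simp [numCycles]

lemma cayleyDist_comm (σ₁ σ₂ : Perm (Fin N)) : cayleyDist σ₁ σ₂ = cayleyDist σ₂ σ₁ := by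
  rw [cayleyDist, cayleyDist, ← numCycles_inv, mul_inv_rev, inv_inv]

lemma cayleyDist_self (σ : Perm (Fin N)) : cayleyDist σ σ = 0 := by
  simp [cayleyDist, numCycles_one]

lemma cayleyDist_mul_left (σ σ₁ σ₂ : Perm (Fin N)) :
    cayleyDist (σ * σ₁) (σ * σ₂) = cayleyDist σ₁ σ₂ := by
  simp [cayleyDist, mul_assoc]

lemma exists_isSwap_prod_eq_length_eq_cayleyDist (τ : Perm (Fin N)) :
    ∃ l : List (Perm (Fin N)), (∀ s ∈ l, s.IsSwap) ∧ l.prod = τ ∧ l.length = cayleyDist 1 τ := by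
  obtain ⟨l, hl, hprod, hlen⟩ := exists_isSwap_prod_eq τ
  refine ⟨l, hl, hprod, ?_⟩
  have := numCycles_add_card_support τ
  rw [cayleyDist, inv_one, one_mul]
  omega

lemma card_filter_cayleyDist_eq_le (j : ℕ) :
    #{τ : Perm (Fin N) | cayleyDist 1 τ = j} ≤ N.choose 2 ^ j := by
  classical
  have hfiber : ({τ : Perm (Fin N) | cayleyDist 1 τ = j} : Finset _) ⊆
      ({σ : Perm (Fin N) | σ.IsSwap} : Finset _) ^ j := by
    intro τ hτ
    obtain ⟨l, hl, rfl, hlen⟩ := exists_isSwap_prod_eq_length_eq_cayleyDist τ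
    rw [← (mem_filter.1 hτ).2, ← hlen]
    exact list_prod_mem_pow fun s hs => mem_filter.2 ⟨mem_univ s, hl s hs⟩
  calc _ ≤ #({σ : Perm (Fin N) | σ.IsSwap} : Finset _) ^ j :=
        (card_le_card hfiber).trans card_pow_le
    _ ≤ N.choose 2 ^ j := by
      gcongr
      simpa using card_filter_isSwap_le (α := Fin N)

lemma sum_pow_cayleyDist_le {q : ℝ} (hq : 0 ≤ q) :
    ∑ τ : Perm (Fin N), q ^ cayleyDist 1 τ ≤ ∑ j ∈ range (N + 1), ((N.choose 2 : ℝ) * q) ^ j := by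
  rw [← sum_fiberwise_of_maps_to (g := cayleyDist 1) (t := range (N + 1))
    fun τ _ => mem_range.2 (Nat.lt_succ_of_le (Nat.sub_le _ _))]
  gcongr with j
  rw [sum_congr rfl fun τ hτ => by rw [(mem_filter.1 hτ).2], sum_const, nsmul_eq_mul, mul_pow]
  gcongr
  exact_mod_cast card_filter_cayleyDist_eq_le j

variable {β : ℝ}

lemma cayleyKernel_isHermitian : (cayleyKernel N β).IsHermitian := by
  ext σ₁ σ₂
  simp [cayleyKernel, cayleyDist_comm σ₁ σ₂]

lemma cayleyKernel_self (σ : Perm (Fin N)) : cayleyKernel N β σ σ = 1 := by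
  simp [cayleyKernel, cayleyDist_self]

lemma sum_cayleyKernel_row (σ : Perm (Fin N)) :
    ∑ σ', cayleyKernel N β σ σ' = ∑ τ : Perm (Fin N), Real.exp (-β) ^ cayleyDist 1 τ := by
  rw [← Equiv.sum_comp (Equiv.mulLeft σ)]
  refine sum_congr rfl fun τ _ => ?_
  have hdist : cayleyDist σ (σ * τ) = cayleyDist 1 τ := by
    simpa using cayleyDist_mul_left σ 1 τ
  simp only [Equiv.coe_mulLeft, cayleyKernel, Matrix.of_apply, hdist]
  rw [mul_comm, Real.exp_nat_mul]

end Cayley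

lemma choose_two_mul_exp_neg_lt_half {N : ℕ} (hN : 0 < N) {β : ℝ}
    (h : ((N : ℝ) - 1) / ((2 : ℝ) ^ ((1 : ℝ) / N) - 1) < Real.exp β) :
    (N.choose 2 : ℝ) * Real.exp (-β) < 1 / 2 := by
  have hN' : N * (N - 1) < Real.exp β :=
    (mul_sub_one_le_div_two_rpow_sub_one (Nat.one_le_cast.2 hN)).trans_lt h
  rw [Nat.cast_choose_two, Real.exp_neg, ← div_eq_mul_inv, div_div, div_lt_iff₀ (by positivity)]
  linarith

/-- If `e^β > (N−1)/(2^{1/N} − 1)` then the Cayley distance kernel on `Sym(N)`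
is positive definite. -/
theorem cayleyKernel_posDef_of_large_beta (N : ℕ) (hN : 0 < N) (β : ℝ)
    (h : ((N : ℝ) - 1) / ((2 : ℝ) ^ ((1 : ℝ) / N) - 1) < Real.exp β) :
    (cayleyKernel N β).PosDef := by
  refine cayleyKernel_isHermitian.posDef_of_sum_norm_lt_re fun σ => ?_
  have hrow : ∑ σ' ∈ univ.erase σ, ‖cayleyKernel N β σ σ'‖
      = ∑ τ : Perm (Fin N), Real.exp (-β) ^ cayleyDist 1 τ - 1 := by
    have hnorm : ∀ σ', ‖cayleyKernel N β σ σ'‖ = cayleyKernel N β σ σ' :=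
      fun σ' => Real.norm_of_nonneg (Real.exp_pos _).le
    rw [sum_congr rfl fun σ' _ => hnorm σ', sum_erase_eq_sub (mem_univ σ), sum_cayleyKernel_row,
      cayleyKernel_self]
  rw [hrow, cayleyKernel_self, RCLike.re_to_real]
  linarith [sum_pow_cayleyDist_le (N := N) (Real.exp_pos (-β)).le,
    geom_sum_lt_two (by positivity) (choose_two_mul_exp_neg_lt_half hN h) (N + 1)]
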